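/- Let n ≥ 2, κ > 0, ε > 0 and let α ∈ {1, …, n−1}. Define u : ℝ^n → ℝ^n by u(x) = (1/2 + G(x)) e_α + 2κ x_α (G(x)^2 − 1/4) e_n. Then u is divergence free: div u(x) = 0 at every point x ∈ ℝ^n. -/

import Mathlib

noncomputable section

/-- `δ(x') = ε + 2κ|x'|²` on `ℝ^{n-1}`. -/
def del (d : ℕ) (κ ε : ℝ) (x' : EuclideanSpace ℝ (Fin d)) : ℝ :=
  ε + 2 * κ * ‖x'‖ ^ 2

/-- `G(x) = x_n / δ(x')`, for `x = (x', x_n) ∈ ℝ^{n-1} × ℝ`. -/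
def Gf (d : ℕ) (κ ε : ℝ) (x : EuclideanSpace ℝ (Fin d) × ℝ) : ℝ :=
  x.2 / del d κ ε x.1

/-- The divergence `div u = ∑_{i=1}^{n-1} ∂_i u_i + ∂_n u_n` of a vector field
`u : ℝ^{n-1} × ℝ → ℝ^{n-1} × ℝ`. -/
def divg {d : ℕ} (u : EuclideanSpace ℝ (Fin d) × ℝ → EuclideanSpace ℝ (Fin d) × ℝ)
    (x : EuclideanSpace ℝ (Fin d) × ℝ) : ℝ :=
  (∑ i : Fin d, (fderiv ℝ u x (EuclideanSpace.single i 1, 0)).1 i)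
    + (fderiv ℝ u x (0, 1)).2

/-- The auxiliary velocity field `u(x) = (1/2 + G) e_α + 2κ x_α (G² − 1/4) e_n`,
for `α ∈ {1, …, n−1}`. -/
def uA (d : ℕ) (κ ε : ℝ) (α : Fin d) (x : EuclideanSpace ℝ (Fin d) × ℝ) :
    EuclideanSpace ℝ (Fin d) × ℝ :=
  ((1 / 2 + Gf d κ ε x) • EuclideanSpace.single α (1 : ℝ),
    2 * κ * x.1 α * (Gf d κ ε x ^ 2 - 1 / 4))

/-- The auxiliary field `u(x) = (1/2 + G) e_α + 2κ x_α (G² − 1/4) e_n` is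
divergence free on all of `ℝⁿ`. -/
theorem divergence_free_translational_field
    (n : ℕ) (hn : 2 ≤ n) (κ ε : ℝ) (hκ : 0 < κ) (hε : 0 < ε)
    (α : Fin (n - 1)) (x : EuclideanSpace ℝ (Fin (n - 1)) × ℝ) :
    divg (uA (n - 1) κ ε α) x = 0 := by
  have hδ0 : del (n-1) κ ε x.1 ≠ 0 := by
    have : (0:ℝ) ≤ ‖x.1‖^2 := sq_nonneg _
    unfold del; positivity
  have hns : HasFDerivAt (fun y : EuclideanSpace ℝ (Fin (n-1)) => ‖y‖ ^ 2)
      ((fderivInnerCLM ℝ (x.1, x.1)).comp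
        ((ContinuousLinearMap.id ℝ (EuclideanSpace ℝ (Fin (n-1)))).prod (ContinuousLinearMap.id ℝ (EuclideanSpace ℝ (Fin (n-1)))))) x.1 := by
    have := (hasFDerivAt_id x.1).inner ℝ (hasFDerivAt_id x.1)
    simpa only [real_inner_self_eq_norm_sq, id_eq] using this
  have hdel : HasFDerivAt (del (n-1) κ ε)
      ((2*κ) • ((fderivInnerCLM ℝ (x.1, x.1)).comp
        ((ContinuousLinearMap.id ℝ (EuclideanSpace ℝ (Fin (n-1)))).prod (ContinuousLinearMap.id ℝ (EuclideanSpace ℝ (Fin (n-1))))))) x.1 := by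
    have := (hns.const_mul (2*κ)).const_add ε
    exact this
  have hδp : HasFDerivAt (𝕜 := ℝ) (fun p : EuclideanSpace ℝ (Fin (n-1)) × ℝ => del (n-1) κ ε p.1) _ x :=
    hdel.comp x (hasFDerivAt_fst)
  have hinv := (hasFDerivAt_inv' (𝕜 := ℝ) (R := ℝ) hδ0).comp x hδp
  have hG : HasFDerivAt (𝕜 := ℝ) (Gf (n-1) κ ε) _ x :=
    (hasFDerivAt_snd (𝕜 := ℝ) (E := EuclideanSpace ℝ (Fin (n-1))) (F := ℝ) (p := x)).mul hinv
  have hxa : HasFDerivAt (fun p : EuclideanSpace ℝ (Fin (n-1)) × ℝ => p.1 α)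
      ((EuclideanSpace.proj α).comp (ContinuousLinearMap.fst ℝ (EuclideanSpace ℝ (Fin (n-1))) ℝ)) x :=
    ((EuclideanSpace.proj α).comp (ContinuousLinearMap.fst ℝ (EuclideanSpace ℝ (Fin (n-1))) ℝ)).hasFDerivAt
  have h1 : HasFDerivAt (𝕜 := ℝ)
      (fun p => (1/2 + Gf (n-1) κ ε p) • EuclideanSpace.single α (1:ℝ)) _ x :=
    (hG.const_add (1/2)).smul_const (EuclideanSpace.single α (1:ℝ))
  have h2 := (hxa.const_mul (2*κ)).mul ((hG.mul hG).sub_const (1/4 : ℝ))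
  simp only [← pow_two] at h2
  have hu : HasFDerivAt (𝕜 := ℝ) (uA (n-1) κ ε α) _ x := HasFDerivAt.prodMk h1 h2
  rw [divg, hu.fderiv]
  simp only [ContinuousLinearMap.prod_apply, ContinuousLinearMap.smulRight_apply,
    ContinuousLinearMap.add_apply, ContinuousLinearMap.comp_apply,
    ContinuousLinearMap.smul_apply, ContinuousLinearMap.coe_fst',
    ContinuousLinearMap.coe_snd', ContinuousLinearMap.id_apply,
    fderivInnerCLM_apply, ContinuousLinearMap.neg_apply,
    ContinuousLinearMap.mulLeftRight_apply, PiLp.proj_apply,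
    PiLp.smul_apply, EuclideanSpace.single_apply, smul_eq_mul]
  simp only [inner_zero_right, inner_zero_left, real_inner_comm, PiLp.zero_apply,
    EuclideanSpace.inner_single_right, RCLike.conj_to_real, mul_ite, mul_one, mul_zero,
    Finset.sum_ite_eq', Finset.mem_univ, if_true, Gf]
  field_simp
  ring
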